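/- arXiv:1601.06255 — 2 statements merged into one kernel-verified Lean document; each statement's English description precedes it below -/
import Mathlib

section
/- Let f₁ = x² + y² + Σ_{i+j=3} a_{ij}x^i y^j and f₂ = Σ_{i+j=3} b_{ij}x^i y^j with b₃₀ − b₁₂ ≠ 0. Then the projective transformation with q₁ = x, q₂ = y, q₃ = z + (a₃₀ − a₁₂)w, q₄ = (b₃₀ − b₁₂)w, p = 1 − ((a₃₀b₁₂ − a₁₂b₃₀)/(b₃₀ − b₁₂))x − ((a₃₀b₀₃ − a₁₂b₀₃ − a₀₃b₃₀ + a₀₃b₁₂)/(b₃₀ − b₁₂))y transforms the 3-jet of (f₁, f₂) into the form (x² + y² + k₁x²y, φ₃) for some constant k₁ ∈ ℝ and some homogeneous cubic φ₃, modulo terms of degree ≥ 4. -/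
/-!
For `f = q + c` with `q` a quadratic and `c` a cubic form, the substitution `v ↦ v / p`,
`p = 1 - ℓ` with `ℓ` linear, gives `f (v / p) = q v / p² + c v / p³`. Hence
`(q + c + q ℓ) / p - f (v / p) = (c ℓ (ℓ - 2) - q ℓ² (1 - ℓ)) / p³`, which is `o(‖v‖³)`.
So the transformation is a 3-jet equivalence once the cubic part of `q₃` is the cubic part of
`f₁` plus `(x² + y²) ℓ`. With `q₃ = g₁ + (a₃₀ - a₁₂) g₂` and `g₂ = f₂ / (b₃₀ - b₁₂)`, the
coefficients of `x³` and `x y²` determine `ℓ`'s `x`-coefficient, the one of `y³` its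
`y`-coefficient, and the one of `x² y` the constant `k₁`.
-/

open Filter Asymptotics Topology

section ProjectiveJet

variable {𝕜 : Type*} [NontriviallyNormedField 𝕜] {E : Type*} [SeminormedAddCommGroup E]
  [NormedSpace 𝕜 E]

theorem isLittleO_projective_jet_error (q c : E → 𝕜) (ℓ : E →L[𝕜] 𝕜)
    (hq_smul : ∀ (t : 𝕜) v, q (t • v) = t ^ 2 * q v)
    (hc_smul : ∀ (t : 𝕜) v, c (t • v) = t ^ 3 * c v)
    (hq : q =O[𝓝 0] fun v => ‖v‖ ^ 2) (hc : c =O[𝓝 0] fun v => ‖v‖ ^ 3) :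
    (fun v => (q v + c v + q v * ℓ v) / (1 - ℓ v)
        - (q ((1 - ℓ v)⁻¹ • v) + c ((1 - ℓ v)⁻¹ • v))) =o[𝓝 0] fun v => ‖v‖ ^ 3 := by
  have hℓ : Tendsto ℓ (𝓝 0) (𝓝 0) := by simpa using ℓ.continuous.tendsto 0
  have hp : Tendsto (fun v => 1 - ℓ v) (𝓝 0) (𝓝 1) := by
    simpa using tendsto_const_nhds.sub hℓ
  have hqℓ : (fun v => q v * ℓ v) =O[𝓝 0] fun v => ‖v‖ ^ 3 := by
    simpa only [← pow_succ] using hq.mul (ℓ.isBigO_id (𝓝 0)).norm_right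
  have hg₁ : Tendsto (fun v => -ℓ v / (1 - ℓ v) ^ 2) (𝓝 0) (𝓝 0) := by
    have h := hℓ.neg.div (hp.pow 2) (by simp)
    rwa [neg_zero, zero_div] at h
  have hg₂ : Tendsto (fun v => ℓ v * (ℓ v - 2) / (1 - ℓ v) ^ 3) (𝓝 0) (𝓝 0) := by
    have h := (hℓ.mul (hℓ.sub_const 2)).div (hp.pow 3) (by simp)
    rwa [zero_mul, zero_div] at h
  have key := (hqℓ.mul_isLittleO ((isLittleO_one_iff ℝ).2 hg₁)).add
    (hc.mul_isLittleO ((isLittleO_one_iff ℝ).2 hg₂))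
  simp only [mul_one] at key
  refine key.congr' ?_ EventuallyEq.rfl
  filter_upwards [hp.eventually_ne one_ne_zero] with v hv
  rw [hq_smul, hc_smul]
  field_simp
  ring

end ProjectiveJet

theorem Prod.mk_div_div_eq_inv_smul {K : Type*} [Field K] (p : K) (v : K × K) :
    (v.1 / p, v.2 / p) = p⁻¹ • v := by
  ext <;> simp [div_eq_inv_mul]

section BinaryForms

variable {R : Type*} [CommRing R]

def binaryCubic (c30 c21 c12 c03 : R) (v : R × R) : R :=
  c30 * v.1 ^ 3 + c21 * v.1 ^ 2 * v.2 + c12 * v.1 * v.2 ^ 2 + c03 * v.2 ^ 3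

theorem binaryCubic_smul (c30 c21 c12 c03 t : R) (v : R × R) :
    binaryCubic c30 c21 c12 c03 (t • v) = t ^ 3 * binaryCubic c30 c21 c12 c03 v := by
  simp only [binaryCubic, Prod.smul_fst, Prod.smul_snd, smul_eq_mul]
  ring

theorem fst_sq_add_snd_sq_smul (t : R) (v : R × R) :
    (t • v).1 ^ 2 + (t • v).2 ^ 2 = t ^ 2 * (v.1 ^ 2 + v.2 ^ 2) := by
  simp only [Prod.smul_fst, Prod.smul_snd, smul_eq_mul]
  ring

end BinaryForms

section Monomials

variable {𝕜 : Type*} [NormedField 𝕜]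

theorem isBigO_fst_pow_mul_snd_pow (l : Filter (𝕜 × 𝕜)) (i j : ℕ) :
    (fun v : 𝕜 × 𝕜 => v.1 ^ i * v.2 ^ j) =O[l] fun v => ‖v‖ ^ (i + j) := by
  refine isBigO_of_le l fun v => ?_
  rw [norm_mul, norm_pow, norm_pow, Real.norm_of_nonneg (by positivity), pow_add]
  gcongr
  exacts [norm_fst_le v, norm_snd_le v]

theorem isBigO_binaryCubic (l : Filter (𝕜 × 𝕜)) (c30 c21 c12 c03 : 𝕜) :
    binaryCubic c30 c21 c12 c03 =O[l] fun v => ‖v‖ ^ 3 := by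
  have h30 := (isBigO_fst_pow_mul_snd_pow l 3 0).const_mul_left c30
  have h21 := (isBigO_fst_pow_mul_snd_pow l 2 1).const_mul_left c21
  have h12 := (isBigO_fst_pow_mul_snd_pow l 1 2).const_mul_left c12
  have h03 := (isBigO_fst_pow_mul_snd_pow l 0 3).const_mul_left c03
  refine (((h30.add h21).add h12).add h03).congr_left fun v => ?_
  simp only [binaryCubic]
  ring

theorem isBigO_fst_sq_add_snd_sq (l : Filter (𝕜 × 𝕜)) :
    (fun v : 𝕜 × 𝕜 => v.1 ^ 2 + v.2 ^ 2) =O[l] fun v => ‖v‖ ^ 2 :=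
  ((isBigO_fst_pow_mul_snd_pow l 2 0).add (isBigO_fst_pow_mul_snd_pow l 0 2)).congr_left
    fun v => by ring

end Monomials

theorem inflection_cubic_matching {K : Type*} [Field K] (a30 a21 a12 a03 b30 b21 b12 b03 : K)
    (hb : b30 - b12 ≠ 0) (v : K × K) :
    v.1 ^ 2 + v.2 ^ 2
      + (a21 + (a30 * b03 - a12 * b03 - a03 * b30 + a03 * b12) / (b30 - b12)
        - (a30 - a12) * b21 / (b30 - b12)) * v.1 ^ 2 * v.2
      + (a30 - a12) * binaryCubic (b30 / (b30 - b12)) (b21 / (b30 - b12))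
        (b12 / (b30 - b12)) (b03 / (b30 - b12)) v
    = v.1 ^ 2 + v.2 ^ 2 + binaryCubic a30 a21 a12 a03 v
      + (v.1 ^ 2 + v.2 ^ 2) * ((a30 * b12 - a12 * b30) / (b30 - b12) * v.1
        + (a30 * b03 - a12 * b03 - a03 * b30 + a03 * b12) / (b30 - b12) * v.2) := by
  simp only [binaryCubic]
  field_simp
  ring

/-- Inflection case `j²f = (x² + y², 0)` with `b₃₀ − b₁₂ ≠ 0`: the stated projective
transformation brings the 3-jet of `(f₁, f₂)` to the form `(x² + y² + k₁x²y, φ₃)` for some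
constant `k₁` and some homogeneous cubic `φ₃`, modulo degree ≥ 4 along the graph of the
target. -/
theorem jet3_inflection_plus_normal_form
    (a30 a21 a12 a03 b30 b21 b12 b03 : ℝ) (hb : b30 - b12 ≠ 0)
    (f₁ f₂ : ℝ × ℝ → ℝ)
    (hf₁ : f₁ = fun v => v.1 ^ 2 + v.2 ^ 2 + a30 * v.1 ^ 3 + a21 * v.1 ^ 2 * v.2
      + a12 * v.1 * v.2 ^ 2 + a03 * v.2 ^ 3)
    (hf₂ : f₂ = fun v => b30 * v.1 ^ 3 + b21 * v.1 ^ 2 * v.2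
      + b12 * v.1 * v.2 ^ 2 + b03 * v.2 ^ 3) :
    ∃ (k₁ p30 p21 p12 p03 : ℝ) (g₁ g₂ P Q₃ : ℝ × ℝ → ℝ),
      g₁ = (fun v => v.1 ^ 2 + v.2 ^ 2 + k₁ * v.1 ^ 2 * v.2) ∧
      g₂ = (fun v => p30 * v.1 ^ 3 + p21 * v.1 ^ 2 * v.2
        + p12 * v.1 * v.2 ^ 2 + p03 * v.2 ^ 3) ∧
      Q₃ = (fun v => g₁ v + (a30 - a12) * g₂ v) ∧
      P = (fun v => 1 - ((a30 * b12 - a12 * b30) / (b30 - b12)) * v.1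
        - ((a30 * b03 - a12 * b03 - a03 * b30 + a03 * b12) / (b30 - b12)) * v.2) ∧
      ((fun v : ℝ × ℝ => Q₃ v / P v - f₁ (v.1 / P v, v.2 / P v))
          =o[𝓝 (0 : ℝ × ℝ)] fun v => ‖v‖ ^ 3) ∧
      ((fun v : ℝ × ℝ => ((b30 - b12) * g₂ v) / P v - f₂ (v.1 / P v, v.2 / P v))
          =o[𝓝 (0 : ℝ × ℝ)] fun v => ‖v‖ ^ 3) := by
  subst hf₁ hf₂
  set α := (a30 * b12 - a12 * b30) / (b30 - b12)
  set β := (a30 * b03 - a12 * b03 - a03 * b30 + a03 * b12) / (b30 - b12)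
  let ℓ : ℝ × ℝ →L[ℝ] ℝ := α • ContinuousLinearMap.fst ℝ ℝ ℝ + β • ContinuousLinearMap.snd ℝ ℝ ℝ
  have hℓ (v : ℝ × ℝ) : ℓ v = α * v.1 + β * v.2 := rfl
  have hP (v : ℝ × ℝ) : 1 - α * v.1 - β * v.2 = 1 - ℓ v := by rw [hℓ]; ring
  refine ⟨a21 + β - (a30 - a12) * b21 / (b30 - b12), b30 / (b30 - b12), b21 / (b30 - b12),
    b12 / (b30 - b12), b03 / (b30 - b12), _, _, _, _, rfl, rfl, rfl, rfl, ?_, ?_⟩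
  · refine (isLittleO_projective_jet_error _ _ ℓ fst_sq_add_snd_sq_smul
      (binaryCubic_smul a30 a21 a12 a03) (isBigO_fst_sq_add_snd_sq _)
      (isBigO_binaryCubic _ _ _ _ _)).congr_left fun v => ?_
    beta_reduce
    rw [hP, Prod.mk_div_div_eq_inv_smul, hℓ,
      ← inflection_cubic_matching a30 a21 a12 a03 b30 b21 b12 b03 hb v]
    simp only [binaryCubic]
    ring
  · refine (isLittleO_projective_jet_error (fun _ => 0) _ ℓ (by simp)
      (binaryCubic_smul b30 b21 b12 b03) (isBigO_zero _ _)
      (isBigO_binaryCubic _ _ _ _ _)).congr_left fun v => ?_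
    beta_reduce
    rw [hP, Prod.mk_div_div_eq_inv_smul]
    simp only [binaryCubic]
    field_simp
    ring
end

section
/- For the Monge form with 2-jet (x², y²) (hyperbolic type), the x-axis and y-axis are asymptotic lines at the origin, and they are the only asymptotic lines: for a view point p = (0,a,0,0), a ≠ 0, the 2-jet of the central projection φ_{p,f} is A²-equivalent to (x, 0, y²) (worse than the crosscap), and similarly for points on the x-axis; whereas for any line through the origin in the xy-plane other than the two axes, some view point on it yields a projection A-equivalent to the crosscap or a regular germ. -/
open Filter Asymptotics Topology

/-- `A²`-equivalence of two germs `(ℝ²,0) → (ℝ³,0)`: their 2-jets agree after composing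
with (jets of) diffeomorphism germs of source and target. -/
def A2Equiv (g h : ℝ × ℝ → ℝ × ℝ × ℝ) : Prop :=
  ∃ (σ : ℝ × ℝ → ℝ × ℝ) (τ : ℝ × ℝ × ℝ → ℝ × ℝ × ℝ)
    (A : (ℝ × ℝ) ≃L[ℝ] ℝ × ℝ) (B : (ℝ × ℝ × ℝ) ≃L[ℝ] ℝ × ℝ × ℝ),
    σ 0 = 0 ∧ τ 0 = 0 ∧ ContDiff ℝ (⊤ : ℕ∞) σ ∧ ContDiff ℝ (⊤ : ℕ∞) τ ∧
    HasFDerivAt σ (A : (ℝ × ℝ) →L[ℝ] ℝ × ℝ) 0 ∧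
    HasFDerivAt τ (B : (ℝ × ℝ × ℝ) →L[ℝ] ℝ × ℝ × ℝ) 0 ∧
    (fun v => h (σ v) - τ (g v)) =o[𝓝 (0 : ℝ × ℝ)] fun v => ‖v‖ ^ 2

/-- Central projection of the Monge form `(f₁, f₂)` from the finite view point
`(p₁, p₂, 0, 0)` of the tangent plane, as a germ `(ℝ²,0) → (ℝ³,0)` (using the chart
adapted to whether `p₁ = 0`). -/
noncomputable def projFin (p₁ p₂ : ℝ) (f₁ f₂ : ℝ × ℝ → ℝ) : ℝ × ℝ → ℝ × ℝ × ℝ :=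
  if p₁ = 0 then
    fun v => (v.1 / (v.2 - p₂), f₁ v / (v.2 - p₂), f₂ v / (v.2 - p₂))
  else
    fun v => ((v.2 - p₂) / (v.1 - p₁) - p₂ / p₁, f₁ v / (v.1 - p₁), f₂ v / (v.1 - p₁))

/-- Central projection of the Monge form `(f₁, f₂)` from the view point at infinity
`[a; b; 0; 0; 0]` of a tangent line of direction `(a, b)`. -/
noncomputable def projInf (a b : ℝ) (f₁ f₂ : ℝ × ℝ → ℝ) : ℝ × ℝ → ℝ × ℝ × ℝ :=
  if a = 0 then fun v => (v.1, f₁ v, f₂ v)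
  else fun v => (v.2 - (b / a) * v.1, f₁ v, f₂ v)

/-- `g` is the central projection of `(f₁, f₂)` from some view point on the tangent line
through the origin with direction `(a, b)` (a finite point or the point at infinity). -/
noncomputable def IsProjFromLine (a b : ℝ) (f₁ f₂ : ℝ × ℝ → ℝ)
    (g : ℝ × ℝ → ℝ × ℝ × ℝ) : Prop :=
  (∃ t : ℝ, t ≠ 0 ∧ g = projFin (t * a) (t * b) f₁ f₂) ∨ g = projInf a b f₁ f₂

/-- The crosscap (`S₀`) normal form `(x, y², xy)`. -/
def crosscap : ℝ × ℝ → ℝ × ℝ × ℝ := fun v => (v.1, v.2 ^ 2, v.1 * v.2)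

/-- A regular (immersion) germ normal form `(x, y, 0)`. -/
def regularGerm : ℝ × ℝ → ℝ × ℝ × ℝ := fun v => (v.1, v.2, 0)



lemma norm_littleO_one {E : Type*} [NormedAddCommGroup E] :
    (fun v : E => ‖v‖) =o[𝓝 (0:E)] (fun _ => (1:ℝ)) :=
  (isLittleO_one_iff ℝ).2 (by simpa using (continuous_norm.tendsto (0:E)))

lemma o32 {E : Type*} [NormedAddCommGroup E] :
    (fun v : E => ‖v‖^3) =o[𝓝 (0:E)] fun v => ‖v‖^2 := by
  have h := (norm_littleO_one (E := E)).mul_isBigO (isBigO_refl (fun v : E => ‖v‖^2) (𝓝 0))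
  simpa [pow_succ, mul_comm, mul_assoc, one_mul] using h

lemma o21 {E : Type*} [NormedAddCommGroup E] :
    (fun v : E => ‖v‖^2) =o[𝓝 (0:E)] fun v => ‖v‖ := by
  have h := (norm_littleO_one (E := E)).mul_isBigO (isBigO_refl (fun v : E => ‖v‖) (𝓝 0))
  simpa [pow_two, one_mul] using h

lemma cube_o {E : Type*} [NormedAddCommGroup E] {u : E → ℝ} (h : ∀ v, |u v| ≤ ‖v‖^3) :
    u =o[𝓝 (0:E)] fun v => ‖v‖^2 :=
  (isBigO_of_le _ (by intro v; simpa using (h v).trans (le_abs_self _))).trans_isLittleO o32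

lemma sq_o {E : Type*} [NormedAddCommGroup E] {u : E → ℝ} (h : ∀ v, |u v| ≤ ‖v‖^2) :
    u =o[𝓝 (0:E)] fun v => ‖v‖ :=
  (isBigO_of_le _ (by intro v; simpa using (h v).trans (le_abs_self _))).trans_isLittleO o21

lemma mul_contAt {E : Type*} [NormedAddCommGroup E] {u φ : E → ℝ} {k : E → ℝ}
    (hu : u =o[𝓝 (0:E)] k) (hφ : ContinuousAt φ 0) :
    (fun v => u v * φ v) =o[𝓝 (0:E)] k := by
  have h := hu.mul_isBigO (hφ.tendsto.isBigO_one ℝ)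
  simpa using h

lemma o_prodMk {α : Type*} {E F : Type*} [NormedAddCommGroup E] [NormedAddCommGroup F]
    {l : Filter α} {f : α → E} {g : α → F} {k : α → ℝ}
    (hf : f =o[l] k) (hg : g =o[l] k) : (fun x => (f x, g x)) =o[l] k := by
  rw [isLittleO_iff] at *
  intro c hc
  filter_upwards [hf hc, hg hc] with x h1 h2
  rw [Prod.norm_def]
  exact max_le h1 h2

-- linear pieces
noncomputable def X3 : ℝ×ℝ×ℝ →L[ℝ] ℝ := ContinuousLinearMap.fst ℝ ℝ (ℝ×ℝ)
noncomputable def Y3 : ℝ×ℝ×ℝ →L[ℝ] ℝ :=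
  (ContinuousLinearMap.fst ℝ ℝ ℝ).comp (ContinuousLinearMap.snd ℝ ℝ (ℝ×ℝ))
noncomputable def Z3 : ℝ×ℝ×ℝ →L[ℝ] ℝ :=
  (ContinuousLinearMap.snd ℝ ℝ ℝ).comp (ContinuousLinearMap.snd ℝ ℝ (ℝ×ℝ))

noncomputable def B1a (a : ℝ) (ha : a ≠ 0) : (ℝ×ℝ×ℝ) ≃L[ℝ] ℝ×ℝ×ℝ :=
  ContinuousLinearEquiv.equivOfInverse
    (((-a) • X3).prod (Y3.prod ((-a) • Z3)))
    (((-a⁻¹) • X3).prod (Y3.prod ((-a⁻¹) • Z3)))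
    (fun w => by simp [X3, Y3, Z3, Prod.ext_iff]; constructor <;> field_simp)
    (fun w => by simp [X3, Y3, Z3, Prod.ext_iff]; constructor <;> field_simp)

lemma B1a_apply (a : ℝ) (ha : a ≠ 0) (w : ℝ×ℝ×ℝ) :
    B1a a ha w = (-a * w.1, w.2.1, -a * w.2.2) := by
  simp [B1a, X3, Y3, Z3, ContinuousLinearEquiv.equivOfInverse_apply]


noncomputable def X2 : ℝ×ℝ →L[ℝ] ℝ := ContinuousLinearMap.fst ℝ ℝ ℝ
noncomputable def Y2 : ℝ×ℝ →L[ℝ] ℝ := ContinuousLinearMap.snd ℝ ℝ ℝ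

noncomputable def Aswap : (ℝ×ℝ) ≃L[ℝ] ℝ×ℝ :=
  ContinuousLinearEquiv.equivOfInverse (Y2.prod X2) (Y2.prod X2)
    (fun w => by simp [X2, Y2]) (fun w => by simp [X2, Y2])

lemma Aswap_apply (v : ℝ×ℝ) : Aswap v = (v.2, v.1) := by
  simp [Aswap, X2, Y2, ContinuousLinearEquiv.equivOfInverse_apply]

noncomputable def B1b (a : ℝ) (ha : a ≠ 0) : (ℝ×ℝ×ℝ) ≃L[ℝ] ℝ×ℝ×ℝ :=
  ContinuousLinearEquiv.equivOfInverse
    (((-a) • X3).prod (Z3.prod ((-a) • Y3)))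
    (((-a⁻¹) • X3).prod (((-a⁻¹) • Z3).prod Y3))
    (fun w => by simp [X3, Y3, Z3, Prod.ext_iff]; constructor <;> field_simp)
    (fun w => by simp [X3, Y3, Z3, Prod.ext_iff]; constructor <;> field_simp)

lemma B1b_apply (a : ℝ) (ha : a ≠ 0) (w : ℝ×ℝ×ℝ) :
    B1b a ha w = (-a * w.1, w.2.2, -a * w.2.1) := by
  simp [B1b, X3, Y3, Z3, ContinuousLinearEquiv.equivOfInverse_apply]


noncomputable def A3 (c : ℝ) : (ℝ×ℝ) ≃L[ℝ] ℝ×ℝ :=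
  ContinuousLinearEquiv.equivOfInverse ((Y2 - c • X2).prod X2) (Y2.prod (X2 + c • Y2))
    (fun w => by simp [X2, Y2, Prod.ext_iff]; try ring) (fun w => by simp [X2, Y2, Prod.ext_iff]; try ring)

lemma A3_apply (c : ℝ) (v : ℝ×ℝ) : A3 c v = (v.2 - c * v.1, v.1) := by
  simp [A3, X2, Y2, ContinuousLinearEquiv.equivOfInverse_apply]

noncomputable def B3 (c : ℝ) (hc : c ≠ 0) : (ℝ×ℝ×ℝ) ≃L[ℝ] ℝ×ℝ×ℝ :=
  ContinuousLinearEquiv.equivOfInverse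
    (X3.prod (Y3.prod ((-(c/2)) • Y3 + (2*c)⁻¹ • Z3)))
    (X3.prod (Y3.prod ((c^2) • Y3 + (2*c) • Z3)))
    (fun w => by simp [X3, Y3, Z3, Prod.ext_iff]; field_simp; ring)
    (fun w => by simp [X3, Y3, Z3, Prod.ext_iff]; field_simp; ring)

lemma B3_apply (c : ℝ) (hc : c ≠ 0) (w : ℝ×ℝ×ℝ) :
    B3 c hc w = (w.1, w.2.1, -(c/2) * w.2.1 + (2*c)⁻¹ * w.2.2) := by
  simp [B3, X3, Y3, Z3, ContinuousLinearEquiv.equivOfInverse_apply]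


lemma o_fst {α : Type*} {E F : Type*} [NormedAddCommGroup E] [NormedAddCommGroup F]
    {l : Filter α} {f : α → E × F} {k : α → ℝ} (hf : f =o[l] k) :
    (fun x => (f x).1) =o[l] k :=
  (isBigO_of_le l (fun x => norm_fst_le (f x))).trans_isLittleO hf

lemma o_snd {α : Type*} {E F : Type*} [NormedAddCommGroup E] [NormedAddCommGroup F]
    {l : Filter α} {f : α → E × F} {k : α → ℝ} (hf : f =o[l] k) :
    (fun x => (f x).2) =o[l] k :=
  (isBigO_of_le l (fun x => norm_snd_le (f x))).trans_isLittleO hf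

lemma coeff_zero {c : ℝ} {n : ℕ}
    (h : (fun t : ℝ => c * t^n) =o[𝓝 (0:ℝ)] fun t => t^n) : c = 0 := by
  by_contra hc
  have h2 := isLittleO_iff.1 h (show (0:ℝ) < |c|/2 by positivity)
  have h3 : ∀ᶠ t in 𝓝[≠] (0:ℝ), ‖c * t^n‖ ≤ |c|/2 * ‖t^n‖ := nhdsWithin_le_nhds h2
  obtain ⟨t, ht, hne⟩ := (h3.and self_mem_nhdsWithin).exists
  have htn : (0:ℝ) < |t^n| := abs_pos.2 (pow_ne_zero n hne)
  rw [Real.norm_eq_abs, Real.norm_eq_abs, abs_mul] at ht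
  nlinarith [abs_pos.2 hc]

/-- restrict a little-o on ℝ² to a curve of norm ≤ |t| -/
lemma comp_curve {G : Type*} [NormedAddCommGroup G] {E : ℝ×ℝ → G}
    (hE : E =o[𝓝 (0:ℝ×ℝ)] fun v => ‖v‖^2) {γ : ℝ → ℝ×ℝ}
    (hγ : Tendsto γ (𝓝 0) (𝓝 0)) (hn : ∀ t, ‖γ t‖ ≤ |t|) :
    (fun t => E (γ t)) =o[𝓝 (0:ℝ)] fun t => t^2 :=
  (hE.comp_tendsto hγ).trans_isBigO (isBigO_of_le _ fun t => by
    have : ‖γ t‖^2 ≤ |t|^2 := pow_le_pow_left₀ (norm_nonneg _) (hn t) 2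
    simpa [abs_pow, sq_abs] using this)

lemma t2_o_t : (fun t : ℝ => t^2) =o[𝓝 (0:ℝ)] fun t => t := by
  have h1 : (fun t : ℝ => t) =o[𝓝 (0:ℝ)] (fun _ => (1:ℝ)) :=
    (isLittleO_one_iff ℝ).2 Filter.tendsto_id
  simpa [pow_two] using h1.mul_isBigO (isBigO_refl (fun t : ℝ => t) (𝓝 0))

lemma deriv_zero_of_o {φ : ℝ → ℝ} {d : ℝ} (hd : HasDerivAt φ d 0) (h0 : φ 0 = 0)
    (h : φ =o[𝓝 (0:ℝ)] fun t => t) : d = 0 := by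
  have h1 := hasDerivAt_iff_isLittleO.1 hd
  have h2 : (fun t : ℝ => φ t - t * d) =o[𝓝 (0:ℝ)] fun t => t := by
    refine h1.congr' (Eventually.of_forall fun t => by simp [h0]; try ring)
      (Eventually.of_forall fun t => by simp)
  have h3 : (fun t : ℝ => d * t^1) =o[𝓝 (0:ℝ)] fun t => t^1 := by
    have := h.sub h2
    refine this.congr' (Eventually.of_forall fun t => by ring) (Eventually.of_forall fun t => by ring)
  exact coeff_zero h3

lemma not_crosscap : ¬ A2Equiv (fun v => (v.1, 0, v.2 ^ 2)) crosscap := by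
  rintro ⟨σ, τ, A, B, hσ0, hτ0, hσs, hτs, hσd, hτd, ho⟩
  -- tangent curve (0,t)
  have hγ2 : HasDerivAt (fun t : ℝ => ((0:ℝ), t)) ((0:ℝ), (1:ℝ)) 0 :=
    (hasDerivAt_const 0 (0:ℝ)).prodMk (hasDerivAt_id 0)
  have hσ2 : HasDerivAt (fun t : ℝ => σ (0, t)) (A ((0:ℝ),(1:ℝ))) 0 :=
    hσd.comp_hasDerivAt 0 hγ2
  have hσ2f : HasDerivAt (fun t : ℝ => (σ ((0:ℝ), t)).1) ((A ((0:ℝ),(1:ℝ))).1) 0 :=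
    ((ContinuousLinearMap.fst ℝ ℝ ℝ).hasFDerivAt).comp_hasDerivAt 0 hσ2
  -- τ along (0,0,t²)
  have hδ : HasDerivAt (fun t : ℝ => ((0:ℝ), (0:ℝ), t^2)) ((0:ℝ),(0:ℝ),(0:ℝ)) 0 := by
    have h2 : HasDerivAt (fun t : ℝ => t^2) (0:ℝ) 0 := by
      simpa using hasDerivAt_pow 2 (0:ℝ)
    exact (hasDerivAt_const 0 (0:ℝ)).prodMk ((hasDerivAt_const 0 (0:ℝ)).prodMk h2)
  have hτδ : HasDerivAt (fun t : ℝ => τ ((0:ℝ), (0:ℝ), t^2)) (B ((0:ℝ),(0:ℝ),(0:ℝ))) 0 := by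
    have hτ00 : HasFDerivAt τ (B : (ℝ×ℝ×ℝ) →L[ℝ] ℝ×ℝ×ℝ) ((0:ℝ), (0:ℝ), (0:ℝ)^2) := by
      have h00 : ((0:ℝ), (0:ℝ), (0:ℝ)^2) = (0:ℝ×ℝ×ℝ) := by norm_num
      rw [h00]; exact hτd
    exact hτ00.comp_hasDerivAt 0 hδ
  have hτδ1 : HasDerivAt (fun t : ℝ => (τ ((0:ℝ), (0:ℝ), t^2)).1)
      ((B ((0:ℝ),(0:ℝ),(0:ℝ))).1) 0 :=
    ((ContinuousLinearMap.fst ℝ ℝ (ℝ×ℝ)).hasFDerivAt).comp_hasDerivAt 0 hτδ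
  have hB0 : (B ((0:ℝ),(0:ℝ),(0:ℝ))) = 0 := by
    have : ((0:ℝ),(0:ℝ),(0:ℝ)) = (0:ℝ×ℝ×ℝ) := rfl
    rw [this]; exact map_zero _
  -- E restricted to (0,t)
  have hcurve2 : (fun t : ℝ => (crosscap (σ ((0:ℝ), t)) - τ ((0:ℝ),(0:ℝ),t^2)))
      =o[𝓝 (0:ℝ)] fun t => t^2 := by
    have := comp_curve ho (γ := fun t => ((0:ℝ), t))
      (by simpa [Prod.mk_zero_zero] using ((continuous_const.prodMk continuous_id).tendsto (0:ℝ) :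
          Tendsto (fun t : ℝ => ((0:ℝ), t)) (𝓝 0) (𝓝 ((0:ℝ), (0:ℝ)))))
      (fun t => by simp [Prod.norm_def])
    simpa using this
  have hφ : (fun t : ℝ => (σ ((0:ℝ),t)).1 - (τ ((0:ℝ),(0:ℝ),t^2)).1)
      =o[𝓝 (0:ℝ)] fun t => t := (o_fst hcurve2).trans t2_o_t
  have ha2 : (A ((0:ℝ),(1:ℝ))).1 = 0 := by
    have hval : (σ ((0:ℝ),(0:ℝ))).1 - (τ ((0:ℝ),(0:ℝ),(0:ℝ)^2)).1 = 0 := by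
      have e1 : ((0:ℝ),(0:ℝ)) = (0:ℝ×ℝ) := rfl
      have e2 : ((0:ℝ),(0:ℝ),(0:ℝ)^2) = (0:ℝ×ℝ×ℝ) := by norm_num
      rw [e1, e2, hσ0, hτ0]; simp
    have hder := (hσ2f.sub hτδ1)
    have := deriv_zero_of_o hder hval hφ
    rw [hB0] at this
    simpa using this
  -- quadratic part along (t,t) and (t,-t)
  have hγp : HasDerivAt (fun t : ℝ => (t, t)) ((1:ℝ), (1:ℝ)) 0 :=
    (hasDerivAt_id 0).prodMk (hasDerivAt_id 0)
  have hγm : HasDerivAt (fun t : ℝ => (t, -t)) ((1:ℝ), (-1:ℝ)) 0 :=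
    (hasDerivAt_id 0).prodMk ((hasDerivAt_id 0).neg)
  -- components and product expansions
  have key : ∀ (γ : ℝ → ℝ×ℝ) (w : ℝ×ℝ), HasDerivAt γ w 0 → γ 0 = 0 →
      (fun t => (σ (γ t)).1 * (σ (γ t)).2 - (A w).1 * (A w).2 * t^2)
        =o[𝓝 (0:ℝ)] fun t => t^2 := by
    intro γ w hγ hγ0
    have hσ' : HasFDerivAt σ (A : (ℝ×ℝ) →L[ℝ] ℝ×ℝ) (γ 0) := by rw [hγ0]; exact hσd
    have hσγ : HasDerivAt (fun t => σ (γ t)) (A w) 0 := hσ'.comp_hasDerivAt 0 hγ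
    have h1 : HasDerivAt (fun t => (σ (γ t)).1) ((A w).1) 0 :=
      ((ContinuousLinearMap.fst ℝ ℝ ℝ).hasFDerivAt).comp_hasDerivAt 0 hσγ
    have h2 : HasDerivAt (fun t => (σ (γ t)).2) ((A w).2) 0 :=
      ((ContinuousLinearMap.snd ℝ ℝ ℝ).hasFDerivAt).comp_hasDerivAt 0 hσγ
    have hval : σ (γ 0) = 0 := by rw [hγ0]; exact hσ0
    have hu : (fun t => (σ (γ t)).1 - (A w).1 * t) =o[𝓝 (0:ℝ)] fun t => t := by
      have := hasDerivAt_iff_isLittleO.1 h1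
      refine this.congr' (Eventually.of_forall fun t => by
        rw [hval]; simp; try ring) (Eventually.of_forall fun t => by simp)
    have hv : (fun t => (σ (γ t)).2 - (A w).2 * t) =o[𝓝 (0:ℝ)] fun t => t := by
      have := hasDerivAt_iff_isLittleO.1 h2
      refine this.congr' (Eventually.of_forall fun t => by
        rw [hval]; simp; try ring) (Eventually.of_forall fun t => by simp)
    have huO : (fun t => (σ (γ t)).1) =O[𝓝 (0:ℝ)] fun t => t := by
      have := hu.isBigO.add (isBigO_const_mul_self ((A w).1) (fun t : ℝ => t) (𝓝 0))
      refine this.congr' (Eventually.of_forall fun t => by ring) (Eventually.of_forall fun t => rfl)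
    have e1 := huO.mul_isLittleO hv
    have e2 := hu.mul_isBigO (isBigO_const_mul_self ((A w).2) (fun t : ℝ => t) (𝓝 0))
    have e3 := e1.add e2
    refine e3.congr' (Eventually.of_forall fun t => by ring) (Eventually.of_forall fun t => by ring)
  have kp := key _ _ hγp rfl
  have km := key _ _ hγm (by norm_num [Prod.ext_iff])
  -- the third component difference kills the τ terms
  have hcp := o_snd (o_snd (comp_curve ho (γ := fun t => (t, t))
      (by simpa [Prod.mk_zero_zero] using ((continuous_id.prodMk continuous_id).tendsto (0:ℝ) :
          Tendsto (fun t : ℝ => (t, t)) (𝓝 0) (𝓝 ((0:ℝ), (0:ℝ)))))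
      (fun t => by simp [Prod.norm_def])))
  have hcm := o_snd (o_snd (comp_curve ho (γ := fun t => (t, -t))
      (by
        have h : Tendsto (fun t : ℝ => (t, -t)) (𝓝 0) (𝓝 ((0:ℝ), -(0:ℝ))) :=
          ((continuous_id.prodMk continuous_id.neg).tendsto (0:ℝ))
        simpa [Prod.mk_zero_zero] using h)
      (fun t => by simp [Prod.norm_def])))
  have hF : (fun t : ℝ => (σ (t,t)).1 * (σ (t,t)).2 - (σ (t,-t)).1 * (σ (t,-t)).2)
      =o[𝓝 (0:ℝ)] fun t => t^2 := by
    have := hcp.sub hcm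
    refine this.congr' (Eventually.of_forall fun t => ?_) (Eventually.of_forall fun t => rfl)
    simp [crosscap, neg_sq]
  have hcoef : (A ((1:ℝ),(1:ℝ))).1 * (A ((1:ℝ),(1:ℝ))).2
      - (A ((1:ℝ),(-1:ℝ))).1 * (A ((1:ℝ),(-1:ℝ))).2 = 0 := by
    have comb := (hF.sub kp).add km
    refine coeff_zero (n := 2) (comb.congr' (Eventually.of_forall fun t => by ring)
      (Eventually.of_forall fun t => by ring))
  -- translate to matrix entries
  have hadd : ((1:ℝ),(1:ℝ)) = ((1:ℝ),(0:ℝ)) + ((0:ℝ),(1:ℝ)) := by norm_num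
  have hsub : ((1:ℝ),(-1:ℝ)) = ((1:ℝ),(0:ℝ)) - ((0:ℝ),(1:ℝ)) := by norm_num [Prod.ext_iff]
  set a1 := (A ((1:ℝ),(0:ℝ))).1
  set a3 := (A ((1:ℝ),(0:ℝ))).2
  set a2 := (A ((0:ℝ),(1:ℝ))).1
  set a4 := (A ((0:ℝ),(1:ℝ))).2
  have hA1 : A ((1:ℝ),(1:ℝ)) = A ((1:ℝ),(0:ℝ)) + A ((0:ℝ),(1:ℝ)) := by rw [hadd, map_add]
  have hA2 : A ((1:ℝ),(-1:ℝ)) = A ((1:ℝ),(0:ℝ)) - A ((0:ℝ),(1:ℝ)) := by rw [hsub, map_sub]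
  rw [hA1, hA2] at hcoef
  simp only [Prod.fst_add, Prod.snd_add, Prod.fst_sub, Prod.snd_sub] at hcoef
  have ha2' : a2 = 0 := ha2
  have h2 : a1 * a4 + a2 * a3 = 0 := by
    have goal2 : ((a1 + a2) * (a3 + a4) - (a1 - a2) * (a3 - a4)) = 0 := hcoef
    linear_combination goal2 / 2
  have hprod : a1 * a4 = 0 := by linear_combination h2 - a3 * ha2'
  -- contradiction with injectivity of A
  have hinj : Function.Injective A := A.injective
  rcases mul_eq_zero.1 hprod with h1 | h4
  · by_cases h4' : a4 = 0
    · have : A ((0:ℝ),(1:ℝ)) = A 0 := by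
        rw [map_zero]; exact Prod.ext ha2' h4'
      have := hinj this
      simp [Prod.ext_iff] at this
    · have hw : A ((a4:ℝ), -a3) = A 0 := by
        rw [map_zero]
        have : ((a4:ℝ), -a3) = a4 • ((1:ℝ),(0:ℝ)) - a3 • ((0:ℝ),(1:ℝ)) := by
          simp [Prod.ext_iff]
        rw [this, map_sub, map_smul, map_smul]
        refine Prod.ext ?_ ?_
        · show a4 * a1 - a3 * a2 = 0
          rw [h1, ha2']; ring
        · show a4 * a3 - a3 * a4 = 0
          ring
      have := hinj hw
      rw [Prod.ext_iff] at this
      exact h4' (by simpa using this.1)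
  · have : A ((0:ℝ),(1:ℝ)) = A 0 := by
      rw [map_zero]; exact Prod.ext ha2' h4
    have := hinj this
    simp [Prod.ext_iff] at this

lemma not_regular : ¬ A2Equiv (fun v => (v.1, 0, v.2 ^ 2)) regularGerm := by
  rintro ⟨σ, τ, A, B, hσ0, hτ0, hσs, hτs, hσd, hτd, ho⟩
  have hγ2 : HasDerivAt (fun t : ℝ => ((0:ℝ), t)) ((0:ℝ), (1:ℝ)) 0 :=
    (hasDerivAt_const 0 (0:ℝ)).prodMk (hasDerivAt_id 0)
  have hσ2 : HasDerivAt (fun t : ℝ => σ (0, t)) (A ((0:ℝ),(1:ℝ))) 0 :=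
    hσd.comp_hasDerivAt 0 hγ2
  have hσ2f : HasDerivAt (fun t : ℝ => (σ ((0:ℝ), t)).1) ((A ((0:ℝ),(1:ℝ))).1) 0 :=
    ((ContinuousLinearMap.fst ℝ ℝ ℝ).hasFDerivAt).comp_hasDerivAt 0 hσ2
  have hσ2s : HasDerivAt (fun t : ℝ => (σ ((0:ℝ), t)).2) ((A ((0:ℝ),(1:ℝ))).2) 0 :=
    ((ContinuousLinearMap.snd ℝ ℝ ℝ).hasFDerivAt).comp_hasDerivAt 0 hσ2
  have hδ : HasDerivAt (fun t : ℝ => ((0:ℝ), (0:ℝ), t^2)) ((0:ℝ),(0:ℝ),(0:ℝ)) 0 := by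
    have h2 : HasDerivAt (fun t : ℝ => t^2) (0:ℝ) 0 := by
      simpa using hasDerivAt_pow 2 (0:ℝ)
    exact (hasDerivAt_const 0 (0:ℝ)).prodMk ((hasDerivAt_const 0 (0:ℝ)).prodMk h2)
  have hτδ : HasDerivAt (fun t : ℝ => τ ((0:ℝ), (0:ℝ), t^2)) (B ((0:ℝ),(0:ℝ),(0:ℝ))) 0 := by
    have hτ00 : HasFDerivAt τ (B : (ℝ×ℝ×ℝ) →L[ℝ] ℝ×ℝ×ℝ) ((0:ℝ), (0:ℝ), (0:ℝ)^2) := by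
      have h00 : ((0:ℝ), (0:ℝ), (0:ℝ)^2) = (0:ℝ×ℝ×ℝ) := by norm_num
      rw [h00]; exact hτd
    exact hτ00.comp_hasDerivAt 0 hδ
  have hτδ1 : HasDerivAt (fun t : ℝ => (τ ((0:ℝ), (0:ℝ), t^2)).1)
      ((B ((0:ℝ),(0:ℝ),(0:ℝ))).1) 0 :=
    ((ContinuousLinearMap.fst ℝ ℝ (ℝ×ℝ)).hasFDerivAt).comp_hasDerivAt 0 hτδ
  have hτδ2 : HasDerivAt (fun t : ℝ => (τ ((0:ℝ), (0:ℝ), t^2)).2.1)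
      ((B ((0:ℝ),(0:ℝ),(0:ℝ))).2.1) 0 := by
    have h1 : HasDerivAt (fun t : ℝ => (τ ((0:ℝ), (0:ℝ), t^2)).2)
        ((B ((0:ℝ),(0:ℝ),(0:ℝ))).2) 0 :=
      ((ContinuousLinearMap.snd ℝ ℝ (ℝ×ℝ)).hasFDerivAt).comp_hasDerivAt 0 hτδ
    exact ((ContinuousLinearMap.fst ℝ ℝ ℝ).hasFDerivAt).comp_hasDerivAt 0 h1
  have hB0 : (B ((0:ℝ),(0:ℝ),(0:ℝ))) = 0 := by
    have : ((0:ℝ),(0:ℝ),(0:ℝ)) = (0:ℝ×ℝ×ℝ) := rfl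
    rw [this]; exact map_zero _
  have hcurve2 : (fun t : ℝ => (regularGerm (σ ((0:ℝ), t)) - τ ((0:ℝ),(0:ℝ),t^2)))
      =o[𝓝 (0:ℝ)] fun t => t^2 := by
    have := comp_curve ho (γ := fun t => ((0:ℝ), t))
      (by simpa [Prod.mk_zero_zero] using ((continuous_const.prodMk continuous_id).tendsto (0:ℝ) :
          Tendsto (fun t : ℝ => ((0:ℝ), t)) (𝓝 0) (𝓝 ((0:ℝ), (0:ℝ)))))
      (fun t => by simp [Prod.norm_def])
    simpa using this
  have hval0 : σ ((0:ℝ),(0:ℝ)) = 0 := hσ0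
  have hvalτ : τ ((0:ℝ),(0:ℝ),(0:ℝ)^2) = 0 := by
    have e2 : ((0:ℝ),(0:ℝ),(0:ℝ)^2) = (0:ℝ×ℝ×ℝ) := by norm_num
    rw [e2]; exact hτ0
  have ha1 : (A ((0:ℝ),(1:ℝ))).1 = 0 := by
    have hφ : (fun t : ℝ => (σ ((0:ℝ),t)).1 - (τ ((0:ℝ),(0:ℝ),t^2)).1)
        =o[𝓝 (0:ℝ)] fun t => t := (o_fst hcurve2).trans t2_o_t
    have := deriv_zero_of_o (hσ2f.sub hτδ1) (by simp only [Pi.sub_apply]; rw [hval0, hvalτ]; simp) hφ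
    rw [hB0] at this
    simpa using this
  have ha2 : (A ((0:ℝ),(1:ℝ))).2 = 0 := by
    have hφ : (fun t : ℝ => (σ ((0:ℝ),t)).2 - (τ ((0:ℝ),(0:ℝ),t^2)).2.1)
        =o[𝓝 (0:ℝ)] fun t => t := (o_fst (o_snd hcurve2)).trans t2_o_t
    have := deriv_zero_of_o (hσ2s.sub hτδ2) (by simp only [Pi.sub_apply]; rw [hval0, hvalτ]; simp) hφ
    rw [hB0] at this
    simpa using this
  have : A ((0:ℝ),(1:ℝ)) = A 0 := by
    rw [map_zero]; exact Prod.ext ha1 ha2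
  have := A.injective this
  simp [Prod.ext_iff] at this

lemma part1a (a : ℝ) (ha : a ≠ 0) (f₁ f₂ : ℝ × ℝ → ℝ)
    (hf₁ : (fun v : ℝ × ℝ => f₁ v - v.1 ^ 2) =o[𝓝 (0 : ℝ × ℝ)] fun v => ‖v‖ ^ 2)
    (hf₂ : (fun v : ℝ × ℝ => f₂ v - v.2 ^ 2) =o[𝓝 (0 : ℝ × ℝ)] fun v => ‖v‖ ^ 2) :
    A2Equiv (projFin 0 a f₁ f₂) (fun v => (v.1, 0, v.2 ^ 2)) := by
  refine ⟨fun v => (v.1 + v.1*v.2*a⁻¹, v.2), fun w => (-a*w.1, w.2.1 + a*w.1^2, -a*w.2.2),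
    ContinuousLinearEquiv.refl ℝ (ℝ×ℝ), B1a a ha, by simp, by simp, by fun_prop, by fun_prop,
    ?_, ?_, ?_⟩
  · rw [hasFDerivAt_iff_isLittleO_nhds_zero]
    have hxy : (fun v : ℝ×ℝ => v.1*v.2*a⁻¹) =o[𝓝 (0:ℝ×ℝ)] fun v => ‖v‖ := by
      refine mul_contAt (sq_o fun v => ?_) continuousAt_const
      rw [abs_mul, pow_two]
      exact mul_le_mul (by simpa using norm_fst_le v) (by simpa using norm_snd_le v)
        (abs_nonneg _) (norm_nonneg _)
    have h0 := (o_prodMk hxy (isLittleO_zero (E' := ℝ) (g' := fun v : ℝ×ℝ => ‖v‖)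
      (l := 𝓝 0))).of_norm_right
    exact h0.congr' (Eventually.of_forall fun v => by simp [Prod.ext_iff]) EventuallyEq.rfl
  · rw [hasFDerivAt_iff_isLittleO_nhds_zero]
    have hsq : (fun w : ℝ×ℝ×ℝ => a*w.1^2) =o[𝓝 (0:ℝ×ℝ×ℝ)] fun w => ‖w‖ := by
      have hb : (fun w : ℝ×ℝ×ℝ => w.1^2) =o[𝓝 (0:ℝ×ℝ×ℝ)] fun w => ‖w‖ := by
        refine sq_o fun w => ?_
        rw [abs_pow]
        exact pow_le_pow_left₀ (abs_nonneg _) (by simpa using norm_fst_le w) 2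
      have := mul_contAt (k := fun w : ℝ×ℝ×ℝ => ‖w‖) hb (continuousAt_const (y := a))
      simpa [mul_comm] using this
    have h0 := (o_prodMk (isLittleO_zero (E' := ℝ) (g' := fun w : ℝ×ℝ×ℝ => ‖w‖) (l := 𝓝 0))
      (o_prodMk hsq (isLittleO_zero (E' := ℝ) (g' := fun w : ℝ×ℝ×ℝ => ‖w‖)
        (l := 𝓝 0)))).of_norm_right
    exact h0.congr' (Eventually.of_forall fun w => by
      simp [B1a_apply, Prod.ext_iff]) EventuallyEq.rfl
  · have hU : ∀ᶠ v in 𝓝 (0:ℝ×ℝ), v.2 ≠ a :=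
      (isOpen_ne.preimage continuous_snd).mem_nhds (by simpa using Ne.symm ha)
    have hden : ContinuousAt (fun v : ℝ×ℝ => (v.2-a)⁻¹) 0 := by
      refine ContinuousAt.inv₀ (by fun_prop) ?_
      simpa using ha
    have hden2 : ContinuousAt (fun v : ℝ×ℝ => ((v.2-a)^2)⁻¹) 0 := by
      refine ContinuousAt.inv₀ (by fun_prop) ?_
      simpa using ha
    have hc1 : (fun v : ℝ×ℝ => (v.1*v.2^2) * (a⁻¹*(v.2-a)⁻¹))
        =o[𝓝 (0:ℝ×ℝ)] fun v => ‖v‖^2 := by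
      refine mul_contAt (cube_o fun v => ?_) (by fun_prop)
      calc |v.1*v.2^2| = |v.1| * |v.2|^2 := by rw [abs_mul, abs_pow]
        _ ≤ ‖v‖ * ‖v‖^2 := by
            refine mul_le_mul (by simpa using norm_fst_le v) ?_ (by positivity) (norm_nonneg _)
            exact pow_le_pow_left₀ (abs_nonneg _) (by simpa using norm_snd_le v) 2
        _ = ‖v‖^3 := by ring
    have hc2 : (fun v : ℝ×ℝ => (f₁ v - v.1^2) * (-(v.2-a)⁻¹)
          + (v.1^2*v.2) * (-(((v.2-a))^2)⁻¹)) =o[𝓝 (0:ℝ×ℝ)] fun v => ‖v‖^2 := by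
      refine (mul_contAt hf₁ (by fun_prop)).add (mul_contAt (cube_o fun v => ?_) (by fun_prop))
      calc |v.1^2*v.2| = |v.1|^2 * |v.2| := by rw [abs_mul, abs_pow]
        _ ≤ ‖v‖^2 * ‖v‖ := by
            refine mul_le_mul ?_ (by simpa using norm_snd_le v) (abs_nonneg _) (by positivity)
            exact pow_le_pow_left₀ (abs_nonneg _) (by simpa using norm_fst_le v) 2
        _ = ‖v‖^3 := by ring
    have hc3 : (fun v : ℝ×ℝ => (f₂ v - v.2^2) * (a*(v.2-a)⁻¹)
          + (v.2^3) * (v.2-a)⁻¹) =o[𝓝 (0:ℝ×ℝ)] fun v => ‖v‖^2 := by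
      refine (mul_contAt hf₂ (by fun_prop)).add (mul_contAt (cube_o fun v => ?_) hden)
      calc |v.2^3| = |v.2|^3 := by rw [abs_pow]
        _ ≤ ‖v‖^3 := pow_le_pow_left₀ (abs_nonneg _) (by simpa using norm_snd_le v) 3
    refine (o_prodMk hc1 (o_prodMk hc2 hc3)).congr' ?_ EventuallyEq.rfl
    filter_upwards [hU] with v hv
    have hva : v.2 - a ≠ 0 := sub_ne_zero.2 hv
    simp only [projFin, if_pos rfl, ↓reduceIte, Prod.ext_iff, Prod.fst_sub, Prod.snd_sub]
    refine ⟨?_, ?_, ?_⟩ <;> (field_simp; try ring)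


lemma part1b (a : ℝ) (ha : a ≠ 0) (f₁ f₂ : ℝ × ℝ → ℝ)
    (hf₁ : (fun v : ℝ × ℝ => f₁ v - v.1 ^ 2) =o[𝓝 (0 : ℝ × ℝ)] fun v => ‖v‖ ^ 2)
    (hf₂ : (fun v : ℝ × ℝ => f₂ v - v.2 ^ 2) =o[𝓝 (0 : ℝ × ℝ)] fun v => ‖v‖ ^ 2) :
    A2Equiv (projFin a 0 f₁ f₂) (fun v => (v.1, 0, v.2 ^ 2)) := by
  refine ⟨fun v => (v.2 + v.1*v.2*a⁻¹, v.1), fun w => (-a*w.1, w.2.2 + a*w.1^2, -a*w.2.1),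
    Aswap, B1b a ha, by simp, by simp, by fun_prop, by fun_prop,
    ?_, ?_, ?_⟩
  · rw [hasFDerivAt_iff_isLittleO_nhds_zero]
    have hxy : (fun v : ℝ×ℝ => v.1*v.2*a⁻¹) =o[𝓝 (0:ℝ×ℝ)] fun v => ‖v‖ := by
      refine mul_contAt (sq_o fun v => ?_) continuousAt_const
      rw [abs_mul, pow_two]
      exact mul_le_mul (by simpa using norm_fst_le v) (by simpa using norm_snd_le v)
        (abs_nonneg _) (norm_nonneg _)
    have h0 := (o_prodMk hxy (isLittleO_zero (E' := ℝ) (g' := fun v : ℝ×ℝ => ‖v‖)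
      (l := 𝓝 0))).of_norm_right
    exact h0.congr' (Eventually.of_forall fun v => by
      simp [Prod.ext_iff, Aswap_apply]) EventuallyEq.rfl
  · rw [hasFDerivAt_iff_isLittleO_nhds_zero]
    have hsq : (fun w : ℝ×ℝ×ℝ => a*w.1^2) =o[𝓝 (0:ℝ×ℝ×ℝ)] fun w => ‖w‖ := by
      have hb : (fun w : ℝ×ℝ×ℝ => w.1^2) =o[𝓝 (0:ℝ×ℝ×ℝ)] fun w => ‖w‖ := by
        refine sq_o fun w => ?_
        rw [abs_pow]
        exact pow_le_pow_left₀ (abs_nonneg _) (by simpa using norm_fst_le w) 2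
      have := mul_contAt (k := fun w : ℝ×ℝ×ℝ => ‖w‖) hb (continuousAt_const (y := a))
      simpa [mul_comm] using this
    have h0 := (o_prodMk (isLittleO_zero (E' := ℝ) (g' := fun w : ℝ×ℝ×ℝ => ‖w‖) (l := 𝓝 0))
      (o_prodMk hsq (isLittleO_zero (E' := ℝ) (g' := fun w : ℝ×ℝ×ℝ => ‖w‖)
        (l := 𝓝 0)))).of_norm_right
    exact h0.congr' (Eventually.of_forall fun w => by
      simp [B1b_apply, Prod.ext_iff]) EventuallyEq.rfl
  · have hU : ∀ᶠ v in 𝓝 (0:ℝ×ℝ), v.1 ≠ a :=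
      (continuous_fst.tendsto (0:ℝ×ℝ)).eventually
        (eventually_ne_nhds (by simpa using Ne.symm ha))
    have hden : ContinuousAt (fun v : ℝ×ℝ => (v.1-a)⁻¹) 0 := by
      refine ContinuousAt.inv₀ (by fun_prop) ?_
      simpa using ha
    have hden2 : ContinuousAt (fun v : ℝ×ℝ => ((v.1-a)^2)⁻¹) 0 := by
      refine ContinuousAt.inv₀ (by fun_prop) ?_
      simpa using ha
    have hc1 : (fun v : ℝ×ℝ => (v.2*v.1^2) * (a⁻¹*(v.1-a)⁻¹))
        =o[𝓝 (0:ℝ×ℝ)] fun v => ‖v‖^2 := by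
      refine mul_contAt (cube_o fun v => ?_) (by fun_prop)
      calc |v.2*v.1^2| = |v.2| * |v.1|^2 := by rw [abs_mul, abs_pow]
        _ ≤ ‖v‖ * ‖v‖^2 := by
            refine mul_le_mul (by simpa using norm_snd_le v) ?_ (by positivity) (norm_nonneg _)
            exact pow_le_pow_left₀ (abs_nonneg _) (by simpa using norm_fst_le v) 2
        _ = ‖v‖^3 := by ring
    have hc2 : (fun v : ℝ×ℝ => (f₂ v - v.2^2) * (-(v.1-a)⁻¹)
          + (v.2^2*v.1) * (-(((v.1-a))^2)⁻¹)) =o[𝓝 (0:ℝ×ℝ)] fun v => ‖v‖^2 := by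
      refine (mul_contAt hf₂ (by fun_prop)).add (mul_contAt (cube_o fun v => ?_) (by fun_prop))
      calc |v.2^2*v.1| = |v.2|^2 * |v.1| := by rw [abs_mul, abs_pow]
        _ ≤ ‖v‖^2 * ‖v‖ := by
            refine mul_le_mul ?_ (by simpa using norm_fst_le v) (abs_nonneg _) (by positivity)
            exact pow_le_pow_left₀ (abs_nonneg _) (by simpa using norm_snd_le v) 2
        _ = ‖v‖^3 := by ring
    have hc3 : (fun v : ℝ×ℝ => (f₁ v - v.1^2) * (a*(v.1-a)⁻¹)
          + (v.1^3) * (v.1-a)⁻¹) =o[𝓝 (0:ℝ×ℝ)] fun v => ‖v‖^2 := by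
      refine (mul_contAt hf₁ (by fun_prop)).add (mul_contAt (cube_o fun v => ?_) hden)
      calc |v.1^3| = |v.1|^3 := by rw [abs_pow]
        _ ≤ ‖v‖^3 := pow_le_pow_left₀ (abs_nonneg _) (by simpa using norm_fst_le v) 3
    refine (o_prodMk hc1 (o_prodMk hc2 hc3)).congr' ?_ EventuallyEq.rfl
    filter_upwards [hU] with v hv
    have hva : v.1 - a ≠ 0 := sub_ne_zero.2 hv
    simp only [projFin, if_neg ha, Prod.ext_iff, Prod.fst_sub, Prod.snd_sub]
    refine ⟨?_, ?_, ?_⟩ <;> (field_simp; try ring)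


lemma part3 (a b : ℝ) (ha : a ≠ 0) (hb : b ≠ 0) (f₁ f₂ : ℝ × ℝ → ℝ)
    (hf₁ : (fun v : ℝ × ℝ => f₁ v - v.1 ^ 2) =o[𝓝 (0 : ℝ × ℝ)] fun v => ‖v‖ ^ 2)
    (hf₂ : (fun v : ℝ × ℝ => f₂ v - v.2 ^ 2) =o[𝓝 (0 : ℝ × ℝ)] fun v => ‖v‖ ^ 2) :
    A2Equiv (projInf a b f₁ f₂) crosscap := by
  set c : ℝ := b / a with hcdef
  have hc : c ≠ 0 := div_ne_zero hb ha
  refine ⟨fun v => (v.2 - c*v.1, v.1),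
    fun w => (w.1, w.2.1, -(c/2)*w.2.1 + (2*c)⁻¹*w.2.2 - (2*c)⁻¹*w.1^2),
    A3 c, B3 c hc, by simp, by simp, by fun_prop, by fun_prop, ?_, ?_, ?_⟩
  · rw [hasFDerivAt_iff_isLittleO_nhds_zero]
    have h0 := isLittleO_zero (E' := ℝ×ℝ) (g' := fun v : ℝ×ℝ => (v:ℝ×ℝ)) (l := 𝓝 0)
    exact h0.congr' (Eventually.of_forall fun v => by
      simp [A3_apply, Prod.ext_iff]) EventuallyEq.rfl
  · rw [hasFDerivAt_iff_isLittleO_nhds_zero]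
    have hsq : (fun w : ℝ×ℝ×ℝ => -(2*c)⁻¹*w.1^2) =o[𝓝 (0:ℝ×ℝ×ℝ)] fun w => ‖w‖ := by
      have hb' : (fun w : ℝ×ℝ×ℝ => w.1^2) =o[𝓝 (0:ℝ×ℝ×ℝ)] fun w => ‖w‖ := by
        refine sq_o fun w => ?_
        rw [abs_pow]
        exact pow_le_pow_left₀ (abs_nonneg _) (by simpa using norm_fst_le w) 2
      have := mul_contAt (k := fun w : ℝ×ℝ×ℝ => ‖w‖) hb' (continuousAt_const (y := -(2*c)⁻¹))
      simpa [mul_comm] using this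
    have h0 := (o_prodMk (isLittleO_zero (E' := ℝ) (g' := fun w : ℝ×ℝ×ℝ => ‖w‖) (l := 𝓝 0))
      (o_prodMk (isLittleO_zero (E' := ℝ) (g' := fun w : ℝ×ℝ×ℝ => ‖w‖) (l := 𝓝 0))
        hsq)).of_norm_right
    exact h0.congr' (Eventually.of_forall fun w => by
      simp [B3_apply, Prod.ext_iff]; try ring) EventuallyEq.rfl
  · have hE : (fun v : ℝ×ℝ => ((0:ℝ), -(f₁ v - v.1^2),
        (c/2)*(f₁ v - v.1^2) - (2*c)⁻¹*(f₂ v - v.2^2)))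
        =o[𝓝 (0:ℝ×ℝ)] fun v => ‖v‖^2 := by
      refine o_prodMk (isLittleO_zero (E' := ℝ) (g' := fun v : ℝ×ℝ => ‖v‖^2) (l := 𝓝 0))
        (o_prodMk hf₁.neg_left ((hf₁.const_mul_left (c/2)).sub (hf₂.const_mul_left (2*c)⁻¹)))
    refine hE.congr' (Eventually.of_forall fun v => ?_) EventuallyEq.rfl
    simp only [projInf, if_neg ha, crosscap, ← hcdef, Prod.ext_iff, Prod.fst_sub, Prod.snd_sub]
    refine ⟨by ring, by ring, by field_simp; ring⟩



/-- Hyperbolic case `j²f = (x², y²)`: the two axes are asymptotic lines and they are the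
only ones.  From a finite view point `(0,a,0,0)`, `a ≠ 0`, on the `y`-axis the 2-jet of
the central projection is `A²`-equivalent to `(x, 0, y²)` — which is worse than the
crosscap — and similarly for finite view points on the `x`-axis; whereas any other
tangent line through the origin carries a view point whose projection is `A`-equivalent
to the crosscap or regular. -/


theorem hyperbolic_two_asymptotic_lines
    (f₁ f₂ : ℝ × ℝ → ℝ) (hf₁s : ContDiff ℝ (⊤ : ℕ∞) f₁) (hf₂s : ContDiff ℝ (⊤ : ℕ∞) f₂)
    (hf₁ : (fun v : ℝ × ℝ => f₁ v - v.1 ^ 2)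
      =o[𝓝 (0 : ℝ × ℝ)] fun v => ‖v‖ ^ 2)
    (hf₂ : (fun v : ℝ × ℝ => f₂ v - v.2 ^ 2)
      =o[𝓝 (0 : ℝ × ℝ)] fun v => ‖v‖ ^ 2) :
    (∀ a : ℝ, a ≠ 0 →
      A2Equiv (projFin 0 a f₁ f₂) (fun v => (v.1, 0, v.2 ^ 2)) ∧
      A2Equiv (projFin a 0 f₁ f₂) (fun v => (v.1, 0, v.2 ^ 2))) ∧
    ¬ (A2Equiv (fun v => (v.1, 0, v.2 ^ 2)) crosscap ∨
        A2Equiv (fun v => (v.1, 0, v.2 ^ 2)) regularGerm) ∧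
    (∀ a b : ℝ, a ≠ 0 → b ≠ 0 →
      ∃ g : ℝ × ℝ → ℝ × ℝ × ℝ, IsProjFromLine a b f₁ f₂ g ∧
        (A2Equiv g crosscap ∨ A2Equiv g regularGerm)) := by
  refine ⟨fun a ha => ⟨part1a a ha f₁ f₂ hf₁ hf₂, part1b a ha f₁ f₂ hf₁ hf₂⟩,
    fun h => h.elim not_crosscap not_regular,
    fun a b ha hb => ⟨projInf a b f₁ f₂, Or.inr rfl,
      Or.inl (part3 a b ha hb f₁ f₂ hf₁ hf₂)⟩⟩
end
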